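/- arXiv:2409.12888 — 3 statements merged into one kernel-verified Lean document; each statement's English description precedes it below -/
import Mathlib

section
/- Suppose H is a weight-preserving operator on V⊗V (i.e. ⟨ν,ν'|H|η,η'⟩ ≠ 0 implies ν+ν' = η+η') with eigenvector w = Σ_{η,η'} W(η,η')|η,η'⟩ of eigenvalue a. Assume the function W satisfies: (i) ∏_{k<L+1} W(η^k,η^{L+1}) depends only on η¹+…+η^L and η^{L+1}, and (ii) ∏_{k=1}^{L-1} W(η^k,η^L)·W(η^k,η^{L+1}) depends only on η¹+…+η^{L-1} and η^L+η^{L+1}, for every L ≥ 2. Define the global Hamiltonian on L sites by 𝓗 = H_{12} + H_{23} + … + H_{L-1,L}, and define 𝐰 = Σ_{η¹,…,η^L} (∏_{k<l} W(η^k,η^l)) |η¹,…,η^L⟩. Then 𝓗𝐰 = (L−1)·a·𝐰. -/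
open Finset

/-- The set of n-tuples of nonnegative integers (each at most J) summing to J. -/
abbrev BJ (n J : ℕ) := {μ : Fin n → Fin (J + 1) // ∑ i, (μ i : ℕ) = J}

/-! Fix a bond `(i, i+1)`. The product `∏_{k<l} W(η^k, η^l)` is `W(η^i, η^{i+1})` times a
cofactor made of factors not touching the bond and, for each other site `m`, of
`W(η^m, η^i) W(η^m, η^{i+1})` (if `m < i`) or `W(η^i, η^m) W(η^{i+1}, η^m)` (if `m > i+1`).
By (ii) with one factor and (i) with two factors, the cofactor depends on `(η^i, η^{i+1})` only
through `η^i + η^{i+1}`, which `H` preserves. Hence `H_{i,i+1}` only sees `W(η^i, η^{i+1})`, on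
which it acts by `a`; summing over the `L - 1` bonds gives the eigenvalue `(L - 1) a`. -/

open Function

theorem prod_prod_eq_mul_prod_compl_pair {ι R : Type*} [Fintype ι] [DecidableEq ι]
    [CommMonoid R] (f : ι → ι → R) {i j : ι} (hij : i ≠ j) :
    ∏ k, ∏ l, f k l = f i i * f i j * f j i * f j j *
      ((∏ m ∈ {i, j}ᶜ, f m i * f m j * f i m * f j m) *
        ∏ k ∈ {i, j}ᶜ, ∏ l ∈ {i, j}ᶜ, f k l) := by
  have split : ∀ g : ι → R, ∏ k, g k = g i * g j * ∏ k ∈ {i, j}ᶜ, g k := fun g => by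
    rw [← prod_mul_prod_compl {i, j} g, prod_pair hij]
  simp only [split (f _), prod_mul_distrib, split (fun k => f k _),
    split (fun k => ∏ l ∈ {i, j}ᶜ, f k l)]
  ac_rfl

section PairProduct

variable {ι S R : Type*} [Fintype ι] [LinearOrder ι] [CommMonoid R]

def pairFactor (W : S → S → R) (η : ι → S) (k l : ι) : R :=
  if k < l then W (η k) (η l) else 1

def pairProduct (W : S → S → R) (η : ι → S) : R :=
  ∏ k, ∏ l, pairFactor W η k l

def bondCofactor (W : S → S → R) (i j : ι) (η : ι → S) : R :=
  (∏ m ∈ {i, j}ᶜ, pairFactor W η m i * pairFactor W η m j * pairFactor W η i m *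
      pairFactor W η j m) *
    ∏ k ∈ {i, j}ᶜ, ∏ l ∈ {i, j}ᶜ, pairFactor W η k l

theorem pairProduct_eq_mul_bondCofactor (W : S → S → R) (η : ι → S) {i j : ι} (hij : i < j) :
    pairProduct W η = W (η i) (η j) * bondCofactor W i j η := by
  rw [pairProduct, prod_prod_eq_mul_prod_compl_pair _ hij.ne, bondCofactor]
  simp [pairFactor, hij, hij.not_gt]

variable {M : Type*} [AddCommMonoid M] {wt : S → M} {W : S → S → R}

theorem bondCofactor_eq_of_covBy
    (hleft : ∀ k x y x' y', wt x + wt y = wt x' + wt y' → W k x * W k y = W k x' * W k y')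
    (hright : ∀ l x y x' y', wt x + wt y = wt x' + wt y' → W x l * W y l = W x' l * W y' l)
    {i j : ι} (hij : i ⋖ j) {η η' : ι → S} (hout : ∀ m, m ≠ i → m ≠ j → η' m = η m)
    (hwt : wt (η' i) + wt (η' j) = wt (η i) + wt (η j)) :
    bondCofactor W i j η' = bondCofactor W i j η := by
  have hcompl : ∀ m ∈ ({i, j}ᶜ : Finset ι), m ≠ i ∧ m ≠ j := fun m hm => by
    simpa [not_or] using hm
  unfold bondCofactor
  congr 1
  · refine prod_congr rfl fun m hm => ?_
    obtain ⟨hmi, hmj⟩ := hcompl m hm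
    rcases hmi.lt_or_gt with hlt | hgt
    · have hmj' : m < j := hlt.trans hij.lt
      simp only [pairFactor, hlt, hmj', hlt.not_gt, hmj'.not_gt, if_true, if_false, mul_one,
        hout m hmi hmj]
      exact hleft _ _ _ _ _ hwt
    · have hjm : j < m := lt_of_le_of_ne (not_lt.mp (hij.2 hgt)) hmj.symm
      simp only [pairFactor, hgt, hjm, hgt.not_gt, hjm.not_gt, if_true, if_false, one_mul,
        hout m hmi hmj]
      exact hright _ _ _ _ _ hwt
  · refine prod_congr rfl fun k hk => prod_congr rfl fun l hl => ?_
    simp only [pairFactor, hout k (hcompl k hk).1 (hcompl k hk).2,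
      hout l (hcompl l hl).1 (hcompl l hl).2]

end PairProduct

theorem sum_filter_eqOn_compl_pair {ι S R : Type*} [Fintype ι] [DecidableEq ι] [Fintype S]
    [DecidableEq S] [AddCommMonoid R] {i j : ι} (hij : i ≠ j) (ν : ι → S) (F : (ι → S) → R) :
    ∑ η with ∀ m, m ≠ i → m ≠ j → ν m = η m, F η =
      ∑ p : S × S, F (update (update ν i p.1) j p.2) := by
  symm
  refine sum_nbij' (fun p => update (update ν i p.1) j p.2)
    (fun η => (η i, η j)) ?_ (fun _ _ => mem_univ _) ?_ ?_ (fun _ _ => rfl)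
  · intro p _
    simp only [mem_filter, mem_univ, true_and]
    intro m hmi hmj
    simp [hmi, hmj]
  · intro p _
    simp [hij]
  · intro η hη
    simp only [mem_filter, mem_univ, true_and] at hη
    funext m
    by_cases hmj : m = j
    · subst hmj; simp
    by_cases hmi : m = i
    · subst hmi; simp [hmj]
    simp [hmi, hmj, hη m hmi hmj]

theorem sum_bond_mul_pairProduct {ι S R M : Type*} [Fintype ι] [LinearOrder ι] [Fintype S]
    [DecidableEq S] [CommSemiring R] [AddCommMonoid M] {wt : S → M} {W : S → S → R}
    {H : S × S → S × S → R} {a : R}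
    (hwp : ∀ p r, H p r ≠ 0 → wt p.1 + wt p.2 = wt r.1 + wt r.2)
    (heig : ∀ p, ∑ r, H p r * W r.1 r.2 = a * W p.1 p.2)
    (hleft : ∀ k x y x' y', wt x + wt y = wt x' + wt y' → W k x * W k y = W k x' * W k y')
    (hright : ∀ l x y x' y', wt x + wt y = wt x' + wt y' → W x l * W y l = W x' l * W y' l)
    {i j : ι} (hij : i ⋖ j) (ν : ι → S) :
    ∑ η, (if ∀ m, m ≠ i → m ≠ j → ν m = η m then 1 else 0) * H (ν i, ν j) (η i, η j) *
      pairProduct W η = a * pairProduct W ν := by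
  have hne := hij.lt.ne
  simp only [ite_mul, one_mul, zero_mul]
  rw [← sum_filter, sum_filter_eqOn_compl_pair hne]
  have hterm : ∀ p : S × S,
      H (ν i, ν j) (update (update ν i p.1) j p.2 i, update (update ν i p.1) j p.2 j) *
        pairProduct W (update (update ν i p.1) j p.2) =
      H (ν i, ν j) p * W p.1 p.2 * bondCofactor W i j ν := fun p => by
    have hupd_i : update (update ν i p.1) j p.2 i = p.1 := by simp [hne]
    have hupd_j : update (update ν i p.1) j p.2 j = p.2 := by simp
    rw [pairProduct_eq_mul_bondCofactor _ _ hij.lt, hupd_i, hupd_j]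
    by_cases hH : H (ν i, ν j) p = 0
    · simp [hH]
    rw [bondCofactor_eq_of_covBy hleft hright hij (η := ν)
      (fun m hmi hmj => by simp [hmi, hmj]) (by rw [hupd_i, hupd_j]; exact (hwp _ _ hH).symm),
      mul_assoc]
  rw [sum_congr rfl fun p _ => hterm p, ← sum_mul, heig,
    pairProduct_eq_mul_bondCofactor _ _ hij.lt, mul_assoc]

/-- If H is weight preserving on V ⊗ V, has an eigenvector w = Σ W(η,η')|η,η'⟩ with
eigenvalue a, and W satisfies the two product assumptions, then the global Hamiltonian
𝓗 = H₁₂ + ⋯ + H_{L-1,L} on L sites has 𝐰 = Σ (∏_{k<l} W(η^k,η^l)) |η¹,…,η^L⟩ as an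
eigenvector with eigenvalue (L-1)·a. -/
theorem stmt4 (n J L : ℕ) (hL : 2 ≤ L) (a : ℂ)
    (H : (BJ n J × BJ n J) → (BJ n J × BJ n J) → ℂ)
    (hwp : ∀ p r : BJ n J × BJ n J, H p r ≠ 0 →
      ∀ i, ((p.1.1 i : ℕ) + (p.2.1 i : ℕ)) = ((r.1.1 i : ℕ) + (r.2.1 i : ℕ)))
    (W : BJ n J → BJ n J → ℂ)
    (heig : ∀ p : BJ n J × BJ n J, ∑ r : BJ n J × BJ n J, H p r * W r.1 r.2 = a * W p.1 p.2)
    -- assumption (i): ∏_{k<M+1} W(η^k, τ) depends only on η¹+…+η^M and τ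
    (hi1 : ∀ (M : ℕ) (η σ : Fin M → BJ n J) (τ : BJ n J),
      (∀ i, ∑ k, ((η k).1 i : ℕ) = ∑ k, ((σ k).1 i : ℕ)) →
      ∏ k, W (η k) τ = ∏ k, W (σ k) τ)
    -- assumption (ii): ∏_{k<M} W(η^k,α)·W(η^k,β) depends only on η¹+…+η^M and α+β
    (hi2 : ∀ (M : ℕ) (η σ : Fin M → BJ n J) (α β α' β' : BJ n J),
      (∀ i, ∑ k, ((η k).1 i : ℕ) = ∑ k, ((σ k).1 i : ℕ)) →
      (∀ i, (α.1 i : ℕ) + (β.1 i : ℕ) = (α'.1 i : ℕ) + (β'.1 i : ℕ)) →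
      ∏ k, (W (η k) α * W (η k) β) = ∏ k, (W (σ k) α' * W (σ k) β')) :
    ∀ ν : Fin L → BJ n J,
      ∑ η : Fin L → BJ n J,
        (∑ i : Fin (L - 1),
          (if ∀ j : Fin L, (j : ℕ) ≠ (i : ℕ) → (j : ℕ) ≠ (i : ℕ) + 1 → ν j = η j
            then (1 : ℂ) else 0) *
            H (ν ⟨i, by have := i.2; omega⟩, ν ⟨(i : ℕ) + 1, by have := i.2; omega⟩)
              (η ⟨i, by have := i.2; omega⟩, η ⟨(i : ℕ) + 1, by have := i.2; omega⟩)) *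
          (∏ k : Fin L, ∏ l : Fin L, if k < l then W (η k) (η l) else 1)
        = ((L : ℂ) - 1) * a *
          (∏ k : Fin L, ∏ l : Fin L, if k < l then W (ν k) (ν l) else 1) := by
  intro ν
  set wt : BJ n J → (Fin n → ℕ) := fun μ c => μ.1 c
  have hwt : ∀ p r, H p r ≠ 0 → wt p.1 + wt p.2 = wt r.1 + wt r.2 :=
    fun p r h => funext (hwp p r h)
  have hleft : ∀ k x y x' y', wt x + wt y = wt x' + wt y' → W k x * W k y = W k x' * W k y' :=
    fun k x y x' y' h => by
      simpa using hi2 1 ![k] ![k] x y x' y' (fun _ => rfl) (congrFun h)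
  have hright : ∀ l x y x' y', wt x + wt y = wt x' + wt y' → W x l * W y l = W x' l * W y' l :=
    fun l x y x' y' h => by
      simpa using hi1 2 ![x, y] ![x', y'] l (fun c => by simpa using congrFun h c)
  have hbond : ∀ i₀ i₁ : Fin L, (i₁ : ℕ) = i₀ + 1 →
      ∑ η, (if ∀ j : Fin L, (j : ℕ) ≠ i₀ → (j : ℕ) ≠ (i₀ : ℕ) + 1 → ν j = η j
          then (1 : ℂ) else 0) * H (ν i₀, ν i₁) (η i₀, η i₁) * pairProduct W η =
        a * pairProduct W ν := by
    intro i₀ i₁ h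
    have hcov : i₀ ⋖ i₁ := ⟨Fin.lt_def.2 (by omega), fun c h₁ h₂ => by
      rw [Fin.lt_def] at h₁ h₂; omega⟩
    rw [← h]
    simp only [Fin.val_ne_iff]
    -- `convert` only has to reconcile the two `Decidable` instances of the bond condition.
    convert sum_bond_mul_pairProduct hwt heig hleft hright hcov ν using 5
  change ∑ η, _ * pairProduct W η = _ * pairProduct W ν
  simp only [sum_mul]
  rw [sum_comm]
  calc _ = ∑ _ : Fin (L - 1), a * pairProduct W ν := sum_congr rfl fun i _ =>
      hbond ⟨i, by omega⟩ ⟨i + 1, by omega⟩ rfl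
    _ = _ := by
      rw [sum_const, card_univ, Fintype.card_fin, nsmul_eq_mul, Nat.cast_sub (by omega : 1 ≤ L),
        Nat.cast_one, mul_assoc]
end

section
/- Suppose an operator R on V⊗V⊗V-type tensor legs satisfies the Yang–Baxter equation R₁₂R₁₃R₂₃ = R₂₃R₁₃R₁₂, and G is a family of invertible diagonal operators G_{ij} defining the gauge transformation S_{ij} = G_{ji}⁻¹ R_{ij} G_{ij}. Assume that for distinct i,j,k there exist invertible diagonal operators A_{i,jk} acting on legs j,k satisfying: G_{ik}⁻¹R_{jk}G_{ik} = A_{i,jk}R_{jk}A_{i,jk}⁻¹, G_{ij}⁻¹R_{jk}G_{ij} = A_{i,jk}⁻¹R_{jk}A_{i,jk}, G_{ki}⁻¹R_{jk}G_{ki} = A_{i,jk}⁻¹R_{jk}A_{i,jk}, and G_{ji}⁻¹R_{jk}G_{ji} = A_{i,jk}R_{jk}A_{i,jk}⁻¹, and that moreover the commutation relations R₁₂G₃₁⁻¹G₃₂⁻¹ = G₃₁⁻¹G₃₂⁻¹R₁₂, G₁₂G₂₃R₂₃ = R₂₃G₁₂G₂₃, R₂₃G₃₁⁻¹G₂₁⁻¹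 = G₂₁⁻¹G₃₁⁻¹R₂₃, G₂₃G₁₃R₁₂ = R₁₂G₁₃G₂₃, G₁₂R₁₃G₃₂⁻¹ = G₃₂⁻¹R₁₃G₁₂, and G₂₃R₁₃G₂₁⁻¹ = G₂₁⁻¹R₁₃G₂₃ hold, with all diagonal G operators with disjoint or equal index supports commuting. Then S also satisfies the Yang–Baxter equation: S₁₂S₁₃S₂₃ = S₂₃S₁₃S₁₂. -/
/-!
Pushing every gauge factor to the outside, both sides of the Yang–Baxter equation for `S`
become `G₁₀⁻¹ G₂₀⁻¹ G₂₁⁻¹ · (the corresponding side for R) · G₀₁ G₀₂ G₁₂` (legs indexed from 0).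
Each move is one of the assumed commutation relations, except commuting `R₁₂` past `G₀₁ G₀₂`.
For that, the conjugation relations for `A_{0,12}` say that `R₁₂` commutes with `G₀₁ G₂₀⁻¹` and
`G₀₂ G₁₀⁻¹`, the relation for `R₁₂ G₂₀⁻¹ G₁₀⁻¹` that it commutes with `G₂₀⁻¹ G₁₀⁻¹`, and the
product of the first two with the inverse of the third is `G₀₁ G₀₂`.
-/

section Gauge

variable {M : Type*} [Monoid M]

theorem mul_mul_eq_mul_mul_of_eq {a b c d : M} (h : a * b = c * d) (x : M) :
    a * (b * x) = c * (d * x) := by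
  rw [← mul_assoc, h, mul_assoc]

theorem mul_mul_mul_eq_mul_mul_mul_of_eq {a b c d e f : M} (h : a * b * c = d * e * f) (x : M) :
    a * (b * (c * x)) = d * (e * (f * x)) := by
  rw [← mul_assoc, ← mul_assoc, h, mul_assoc, mul_assoc]

theorem Units.commute_mul_inv_of_conj_eq {x : M} {u w : Mˣ}
    (h : ↑u⁻¹ * x * u = ↑w⁻¹ * x * w) : Commute x ↑(u * w⁻¹) :=
  calc x * ↑(u * w⁻¹)
      = u * (↑u⁻¹ * x * u) * ↑w⁻¹ := by
        simp only [Units.val_mul, mul_assoc, Units.mul_inv_cancel_left]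
    _ = u * (↑w⁻¹ * x * w) * ↑w⁻¹ := by rw [h]
    _ = ↑(u * w⁻¹) * x := by simp only [Units.val_mul, mul_assoc, Units.mul_inv, mul_one]

theorem commute_mul_of_conj_eq {x : M} {a b c d : Mˣ}
    (hac : ↑a⁻¹ * x * a = ↑c⁻¹ * x * c) (hbd : ↑b⁻¹ * x * b = ↑d⁻¹ * x * d)
    (hcd : Commute x ↑(c⁻¹ * d⁻¹)) (hbc : Commute b c) : Commute x (a * b : M) := by
  have hprod : a * c⁻¹ * (b * d⁻¹) * (c⁻¹ * d⁻¹)⁻¹ = a * b := by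
    simp only [mul_inv_rev, inv_inv, mul_assoc, inv_mul_cancel_left]
    rw [hbc.eq, inv_mul_cancel_left]
  have h := ((Units.commute_mul_inv_of_conj_eq hac).mul_right
    (Units.commute_mul_inv_of_conj_eq hbd)).mul_right hcd.units_inv_right
  rwa [← Units.val_mul, ← Units.val_mul, hprod, Units.val_mul] at h

variable (R : Fin 3 → Fin 3 → M) (G : Fin 3 → Fin 3 → Mˣ)

def gaugeTransform (i j : Fin 3) : M := ↑(G j i)⁻¹ * R i j * G i j

theorem gaugeTransform_mul_mul_eq_lhs
    (hG : ∀ i j k l, Commute (G i j : M) (G k l))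
    (h1 : R 0 1 * ↑(G 2 0)⁻¹ * ↑(G 2 1)⁻¹ = ↑(G 2 0)⁻¹ * ↑(G 2 1)⁻¹ * R 0 1)
    (h5 : G 0 1 * R 0 2 * ↑(G 2 1)⁻¹ = ↑(G 2 1)⁻¹ * R 0 2 * G 0 1)
    (h12 : Commute (R 1 2) (G 0 1 * G 0 2 : M)) :
    gaugeTransform R G 0 1 * gaugeTransform R G 0 2 * gaugeTransform R G 1 2
      = ↑(G 1 0)⁻¹ * ↑(G 2 0)⁻¹ * ↑(G 2 1)⁻¹ * (R 0 1 * R 0 2 * R 1 2) *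
          (G 0 1 * G 0 2 * G 1 2 : M) := by
  simp only [gaugeTransform, mul_assoc]
  rw [(hG 0 1 2 0).units_inv_right.left_comm, (hG 0 2 2 1).units_inv_right.left_comm,
    mul_mul_mul_eq_mul_mul_mul_of_eq h5, mul_mul_mul_eq_mul_mul_mul_of_eq h1,
    ← mul_assoc (G 0 1 : M), mul_mul_eq_mul_mul_of_eq h12.eq.symm]
  simp only [mul_assoc]

theorem gaugeTransform_mul_mul_eq_rhs
    (hG : ∀ i j k l, Commute (G i j : M) (G k l))
    (h3 : R 1 2 * ↑(G 2 0)⁻¹ * ↑(G 1 0)⁻¹ = ↑(G 1 0)⁻¹ * ↑(G 2 0)⁻¹ * R 1 2)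
    (h4 : G 1 2 * G 0 2 * R 0 1 = R 0 1 * G 0 2 * G 1 2)
    (h6 : G 1 2 * R 0 2 * ↑(G 1 0)⁻¹ = ↑(G 1 0)⁻¹ * R 0 2 * G 1 2) :
    gaugeTransform R G 1 2 * gaugeTransform R G 0 2 * gaugeTransform R G 0 1
      = ↑(G 1 0)⁻¹ * ↑(G 2 0)⁻¹ * ↑(G 2 1)⁻¹ * (R 1 2 * R 0 2 * R 0 1) *
          (G 0 1 * G 0 2 * G 1 2 : M) := by
  simp only [gaugeTransform, mul_assoc]
  rw [(hG 1 2 2 0).units_inv_right.left_comm, (hG 0 2 1 0).units_inv_right.left_comm,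
    mul_mul_mul_eq_mul_mul_mul_of_eq h6, mul_mul_mul_eq_mul_mul_mul_of_eq h3,
    mul_mul_mul_eq_mul_mul_mul_of_eq h4, (hG 2 1 1 0).units_inv_left.units_inv_right.left_comm,
    (hG 2 1 2 0).units_inv_left.units_inv_right.left_comm, (hG 1 2 0 1).eq,
    (hG 0 2 0 1).left_comm]

end Gauge

theorem stmt6_general {M : Type*} [Monoid M]
    (R : Fin 3 → Fin 3 → M) (G : Fin 3 → Fin 3 → Mˣ) (A : Fin 3 → Fin 3 → Fin 3 → Mˣ)
    (hYB : R 0 1 * R 0 2 * R 1 2 = R 1 2 * R 0 2 * R 0 1)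
    (hA : ∀ i j k : Fin 3, i ≠ j → j ≠ k → i ≠ k →
      (((G i k)⁻¹ : Mˣ) : M) * R j k * (G i k : M)
          = (A i j k : M) * R j k * (((A i j k)⁻¹ : Mˣ) : M) ∧
      (((G i j)⁻¹ : Mˣ) : M) * R j k * (G i j : M)
          = (((A i j k)⁻¹ : Mˣ) : M) * R j k * (A i j k : M) ∧
      (((G k i)⁻¹ : Mˣ) : M) * R j k * (G k i : M)
          = (((A i j k)⁻¹ : Mˣ) : M) * R j k * (A i j k : M) ∧
      (((G j i)⁻¹ : Mˣ) : M) * R j k * (G j i : M)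
          = (A i j k : M) * R j k * (((A i j k)⁻¹ : Mˣ) : M))
    (h1 : R 0 1 * (((G 2 0)⁻¹ : Mˣ) : M) * (((G 2 1)⁻¹ : Mˣ) : M)
        = (((G 2 0)⁻¹ : Mˣ) : M) * (((G 2 1)⁻¹ : Mˣ) : M) * R 0 1)
    (h3 : R 1 2 * (((G 2 0)⁻¹ : Mˣ) : M) * (((G 1 0)⁻¹ : Mˣ) : M)
        = (((G 1 0)⁻¹ : Mˣ) : M) * (((G 2 0)⁻¹ : Mˣ) : M) * R 1 2)
    (h4 : (G 1 2 : M) * (G 0 2 : M) * R 0 1 = R 0 1 * (G 0 2 : M) * (G 1 2 : M))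
    (h5 : (G 0 1 : M) * R 0 2 * (((G 2 1)⁻¹ : Mˣ) : M)
        = (((G 2 1)⁻¹ : Mˣ) : M) * R 0 2 * (G 0 1 : M))
    (h6 : (G 1 2 : M) * R 0 2 * (((G 1 0)⁻¹ : Mˣ) : M)
        = (((G 1 0)⁻¹ : Mˣ) : M) * R 0 2 * (G 1 2 : M))
    (hGcomm : ∀ i j k l : Fin 3, (G i j : M) * (G k l : M) = (G k l : M) * (G i j : M)) :
    ((((G 1 0)⁻¹ : Mˣ) : M) * R 0 1 * (G 0 1 : M)) *
      ((((G 2 0)⁻¹ : Mˣ) : M) * R 0 2 * (G 0 2 : M)) *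
      ((((G 2 1)⁻¹ : Mˣ) : M) * R 1 2 * (G 1 2 : M))
    = ((((G 2 1)⁻¹ : Mˣ) : M) * R 1 2 * (G 1 2 : M)) *
      ((((G 2 0)⁻¹ : Mˣ) : M) * R 0 2 * (G 0 2 : M)) *
      ((((G 1 0)⁻¹ : Mˣ) : M) * R 0 1 * (G 0 1 : M)) := by
  have hG : ∀ i j k l, Commute (G i j : M) (G k l) := hGcomm
  obtain ⟨h02, h01, h20, h10⟩ := hA 0 1 2 (by decide) (by decide) (by decide)
  have h3_commute : Commute (R 1 2) ↑((G 2 0)⁻¹ * (G 1 0)⁻¹) := by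
    rw [Commute, SemiconjBy, Units.val_mul, ← mul_assoc, h3,
      (hG 1 0 2 0).units_inv_left.units_inv_right.eq]
  have h12 : Commute (R 1 2) (G 0 1 * G 0 2 : M) :=
    commute_mul_of_conj_eq (h01.trans h20.symm) (h02.trans h10.symm) h3_commute
      (hG 0 2 2 0).units_of_val
  refine (gaugeTransform_mul_mul_eq_lhs R G hG h1 h5 h12).trans ?_
  rw [hYB]
  exact (gaugeTransform_mul_mul_eq_rhs R G hG h3 h4 h6).symm

/-- Gauge transformations preserve the Yang–Baxter equation: if R satisfies YBE, the
diagonal gauge operators G (all commuting with each other) admit diagonal operators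
A_{i,jk} satisfying the four conjugation relations, and the six commutation relations
hold, then S_{ij} = G_{ji}⁻¹ R_{ij} G_{ij} also satisfies the Yang–Baxter equation. -/
theorem stmt6 {M : Type*} [Monoid M]
    (R : Fin 3 → Fin 3 → M) (G : Fin 3 → Fin 3 → Mˣ) (A : Fin 3 → Fin 3 → Fin 3 → Mˣ)
    (hYB : R 0 1 * R 0 2 * R 1 2 = R 1 2 * R 0 2 * R 0 1)
    (hA : ∀ i j k : Fin 3, i ≠ j → j ≠ k → i ≠ k →
      (((G i k)⁻¹ : Mˣ) : M) * R j k * (G i k : M)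
          = (A i j k : M) * R j k * (((A i j k)⁻¹ : Mˣ) : M) ∧
      (((G i j)⁻¹ : Mˣ) : M) * R j k * (G i j : M)
          = (((A i j k)⁻¹ : Mˣ) : M) * R j k * (A i j k : M) ∧
      (((G k i)⁻¹ : Mˣ) : M) * R j k * (G k i : M)
          = (((A i j k)⁻¹ : Mˣ) : M) * R j k * (A i j k : M) ∧
      (((G j i)⁻¹ : Mˣ) : M) * R j k * (G j i : M)
          = (A i j k : M) * R j k * (((A i j k)⁻¹ : Mˣ) : M))
    (h1 : R 0 1 * (((G 2 0)⁻¹ : Mˣ) : M) * (((G 2 1)⁻¹ : Mˣ) : M)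
        = (((G 2 0)⁻¹ : Mˣ) : M) * (((G 2 1)⁻¹ : Mˣ) : M) * R 0 1)
    (h2 : (G 0 1 : M) * (G 1 2 : M) * R 1 2 = R 1 2 * (G 0 1 : M) * (G 1 2 : M))
    (h3 : R 1 2 * (((G 2 0)⁻¹ : Mˣ) : M) * (((G 1 0)⁻¹ : Mˣ) : M)
        = (((G 1 0)⁻¹ : Mˣ) : M) * (((G 2 0)⁻¹ : Mˣ) : M) * R 1 2)
    (h4 : (G 1 2 : M) * (G 0 2 : M) * R 0 1 = R 0 1 * (G 0 2 : M) * (G 1 2 : M))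
    (h5 : (G 0 1 : M) * R 0 2 * (((G 2 1)⁻¹ : Mˣ) : M)
        = (((G 2 1)⁻¹ : Mˣ) : M) * R 0 2 * (G 0 1 : M))
    (h6 : (G 1 2 : M) * R 0 2 * (((G 1 0)⁻¹ : Mˣ) : M)
        = (((G 1 0)⁻¹ : Mˣ) : M) * R 0 2 * (G 1 2 : M))
    (hGcomm : ∀ i j k l : Fin 3, (G i j : M) * (G k l : M) = (G k l : M) * (G i j : M)) :
    ((((G 1 0)⁻¹ : Mˣ) : M) * R 0 1 * (G 0 1 : M)) *
      ((((G 2 0)⁻¹ : Mˣ) : M) * R 0 2 * (G 0 2 : M)) *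
      ((((G 2 1)⁻¹ : Mˣ) : M) * R 1 2 * (G 1 2 : M))
    = ((((G 2 1)⁻¹ : Mˣ) : M) * R 1 2 * (G 1 2 : M)) *
      ((((G 2 0)⁻¹ : Mˣ) : M) * R 0 2 * (G 0 2 : M)) *
      ((((G 1 0)⁻¹ : Mˣ) : M) * R 0 1 * (G 0 1 : M)) :=
  stmt6_general R G A hYB hA h1 h3 h4 h5 h6 hGcomm
end

section
/- With E_i|μ⟩ = [μ_{i+1}]_q|μ+ε_i⟩ and E'_i|μ⟩ = |μ+ε'_i⟩ as above, the operators satisfy the q-Serre-type relation E'_i E_i² − (q+q⁻¹) E_i E'_i E_i + E_i² E'_i = 0. -/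
/-- The q-deformed integer [n]_q = (q^n - q⁻ⁿ)/(q - q⁻¹). -/
noncomputable def qd (q : ℂ) (n : ℕ) : ℂ := (q ^ n - q⁻¹ ^ n) / (q - q⁻¹)

lemma qd_zero (q : ℂ) : qd q 0 = 0 := by simp [qd]

lemma qd_sub_ne (q : ℂ) (hq : q ≠ 0) (hq2 : q ^ 2 ≠ 1) : q - q⁻¹ ≠ 0 := by
  intro h
  apply hq2
  have h1 : q = q⁻¹ := by linear_combination h
  calc q ^ 2 = q * q := sq q
  _ = q * q⁻¹ := by rw [← h1]
  _ = 1 := mul_inv_cancel₀ hq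

lemma qd_one (q : ℂ) (hq : q ≠ 0) (hq2 : q ^ 2 ≠ 1) : qd q 1 = 1 := by
  simp [qd, div_self (qd_sub_ne q hq hq2)]

lemma qd_rec (q : ℂ) (hq : q ≠ 0) (hq2 : q ^ 2 ≠ 1) (c : ℕ) :
    qd q (c+1) + qd q (c+3) = (q + q⁻¹) * qd q (c+2) := by
  have hden := qd_sub_ne q hq hq2
  have h : q * q⁻¹ = 1 := mul_inv_cancel₀ hq
  unfold qd
  rw [← add_div, ← mul_div_assoc, div_eq_div_iff hden hden]
  linear_combination ((q⁻¹ ^ (c+1) - q ^ (c+1)) * (q - q⁻¹)) * h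

lemma qd_two (q : ℂ) (hq : q ≠ 0) (hq2 : q ^ 2 ≠ 1) : qd q 2 = q + q⁻¹ := by
  have hden := qd_sub_ne q hq hq2
  have h : q * q⁻¹ = 1 := mul_inv_cancel₀ hq
  have h01 : qd q 0 + qd q 2 = (q + q⁻¹) * qd q 1 := by
    unfold qd
    rw [← add_div, ← mul_div_assoc, div_eq_div_iff hden hden]
    ring
  rw [qd_zero, qd_one q hq hq2, zero_add, mul_one] at h01
  exact h01

/-- Canonical form: μ with `a` added at slot `i` and slot `i+1` replaced by `b`. -/
def FF (n i : ℕ) (μ : Fin n → ℕ) (a b : ℕ) : Fin n → ℕ :=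
  fun j => if (j : ℕ) = i then μ j + a else if (j : ℕ) = i + 1 then b else μ j

/-- The q-Serre-type relation E'_i E_i² − (q+q⁻¹) E_i E'_i E_i + E_i² E'_i = 0 for
E_i|μ⟩ = [μ_{i+1}]_q|μ+ε_i⟩ and E'_i|μ⟩ = |μ+ε'_i⟩. -/
theorem stmt9 (n : ℕ) (q : ℂ) (hq : q ≠ 0) (hq2 : q ^ 2 ≠ 1) (i : ℕ) (hi : i + 1 < n)
    (E E' : ((Fin n → ℕ) →₀ ℂ) →ₗ[ℂ] ((Fin n → ℕ) →₀ ℂ))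
    (hE : ∀ μ : Fin n → ℕ, E (Finsupp.single μ 1) =
      qd q (μ ⟨i + 1, hi⟩) • Finsupp.single
        (fun j : Fin n => if (j : ℕ) = i then μ j + 1 else if (j : ℕ) = i + 1 then μ j - 1 else μ j) 1)
    (hE' : ∀ μ : Fin n → ℕ, E' (Finsupp.single μ 1) =
      Finsupp.single
        (fun j : Fin n => if (j : ℕ) = i then μ j + 1 else if (j : ℕ) = i + 1 then μ j + 1 else μ j) 1) :
    E' ∘ₗ (E ∘ₗ E) - (q + q⁻¹) • (E ∘ₗ (E' ∘ₗ E)) + (E ∘ₗ E) ∘ₗ E' = 0 := by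
  have hne : (i + 1 : ℕ) ≠ i := by omega
  ext μ : 2
  simp only [LinearMap.add_apply, LinearMap.sub_apply, LinearMap.smul_apply, LinearMap.comp_apply,
    LinearMap.zero_apply, Finsupp.lsingle_apply]
  set m := μ ⟨i + 1, hi⟩ with hmdef
  have hval : ∀ a b, FF n i μ a b ⟨i + 1, hi⟩ = b := by
    intro a b
    simp [FF, hne]
  have hFs : ∀ f g : Fin n → ℕ, f = g → Finsupp.single f (1 : ℂ) = Finsupp.single g 1 :=
    fun f g h => by rw [h]
  have hEF : ∀ a b, E (Finsupp.single (FF n i μ a b) 1) =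
      qd q b • Finsupp.single (FF n i μ (a + 1) (b - 1)) 1 := by
    intro a b
    rw [hE (FF n i μ a b), hval]
    congr 1
    apply hFs
    funext j
    rcases eq_or_ne (j : ℕ) i with h1 | h1
    · simp [FF, h1, hne, Nat.add_assoc]
    · rcases eq_or_ne (j : ℕ) (i + 1) with h2 | h2
      · simp [FF, h1, h2]
      · simp [FF, h1, h2]
  have hE'F : ∀ a b, E' (Finsupp.single (FF n i μ a b) 1) =
      Finsupp.single (FF n i μ (a + 1) (b + 1)) 1 := by
    intro a b
    rw [hE' (FF n i μ a b)]
    apply hFs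
    funext j
    rcases eq_or_ne (j : ℕ) i with h1 | h1
    · simp [FF, h1, hne, Nat.add_assoc]
    · rcases eq_or_ne (j : ℕ) (i + 1) with h2 | h2
      · simp [FF, h1, h2]
      · simp [FF, h1, h2]
  have h0 : Finsupp.single μ (1 : ℂ) = Finsupp.single (FF n i μ 0 m) 1 := by
    apply hFs
    funext j
    rcases eq_or_ne (j : ℕ) i with h1 | h1
    · simp [FF, h1]
    · rcases eq_or_ne (j : ℕ) (i + 1) with h2 | h2
      · have : j = ⟨i + 1, hi⟩ := Fin.ext (by simpa using h2)
        simp [FF, h1, h2, this, hmdef]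
      · simp [FF, h1, h2]
  rw [h0]
  simp only [hEF, hE'F, map_smul, smul_smul, Nat.zero_add, Nat.add_sub_cancel]
  rcases m with _ | c
  · simp [qd_zero]
  · rcases c with _ | c
    · norm_num [qd_zero, qd_one q hq hq2, qd_two q hq hq2]
    · simp only [show c + 1 + 1 - 1 - 1 + 1 = c + 1 from by omega,
        show c + 1 + 1 - 1 + 1 = c + 2 from by omega,
        show c + 1 + 1 - 1 = c + 1 from by omega,
        show c + 1 + 1 + 1 = c + 3 from by omega,
        show c + 1 + 1 = c + 2 from by omega,
        show c + 1 - 1 + 1 = c + 1 from by omega]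
      rw [← sub_smul, ← add_smul,
        show qd q (c + 2) * qd q (c + 1) - (q + q⁻¹) * (qd q (c + 2) * qd q (c + 2)) +
          qd q (c + 3) * qd q (c + 2) = 0 from by
            linear_combination qd q (c + 2) * qd_rec q hq hq2 c,
        zero_smul]
end
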